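/- In A_n(X) with n odd, for all a,b,c,d ∈ X one has W(c,b)·O·F(a,d)·E = γ(a,b)·F(c,d)·E, where O = e_1 e_3 ⋯ e_{n−2} and E = e_2 e_4 ⋯ e_{n−1}. -/
import Mathlib


/-- The ascending product `e j * e (j+1) * ⋯ * e k` (empty if `k + 1 ≤ j`). -/
def ascProd {A : Type*} [Ring A] (e : ℕ → A) (j k : ℕ) : A :=
  ((List.range (k + 1 - j)).map (fun i => e (j + i))).prod

/-- The descending product `e k * e (k-1) * ⋯ * e j` (empty if `k + 1 ≤ j`). -/
def descProd {A : Type*} [Ring A] (e : ℕ → A) (j k : ℕ) : A :=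
  ((List.range (k + 1 - j)).map (fun i => e (k - i))).prod

/-- For `n` odd, `O = e 1 * e 3 * ⋯ * e (n-2)` (equal to `1` when `n = 1`). -/
def Oprod {A : Type*} [Ring A] (e : ℕ → A) (n : ℕ) : A :=
  ((List.range ((n - 1) / 2)).map (fun i => e (2 * i + 1))).prod

/-- For `n` odd, `E = e 2 * e 4 * ⋯ * e (n-1)` (equal to `1` when `n = 1`). -/
def Eprod {A : Type*} [Ring A] (e : ℕ → A) (n : ℕ) : A :=
  ((List.range ((n - 1) / 2)).map (fun i => e (2 * i + 2))).prod

/-- For `n` even, `Θ = e 1 * e 3 * ⋯ * e (n-1)`. -/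
def ThetaProd {A : Type*} [Ring A] (e : ℕ → A) (n : ℕ) : A :=
  ((List.range (n / 2)).map (fun i => e (2 * i + 1))).prod

/-- For `n` even, `Ω = e 2 * e 4 * ⋯ * e (n-2)` (equal to `1` when `n = 2`). -/
def OmegaProd {A : Type*} [Ring A] (e : ℕ → A) (n : ℕ) : A :=
  ((List.range (n / 2 - 1)).map (fun i => e (2 * i + 2))).prod

/-- The defining relations (L1)–(L38) of the algebraic label algebra `A_n(X)`,
with TL generators `e i` (`1 ≤ i ≤ n - 1`), label generators `F a b`, `G a b`
(even) and `W a b`, `V a b` (odd), and parameters `β`, `α a b`, `δ a b`, `γ a b`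
in a commutative base ring `R`. -/
structure LabelAlgebraRel (R : Type*) [CommRing R] (A : Type*) [Ring A] [Algebra R A]
    (X : Type*) (n : ℕ) (e : ℕ → A) (F G W V : X → X → A)
    (β : R) (α δ γ : X → X → R) : Prop where
  L1 : ∀ i j, 1 ≤ i → i ≤ n - 1 → 1 ≤ j → j ≤ n - 1 → (i + 2 ≤ j ∨ j + 2 ≤ i) →
    e i * e j = e j * e i
  L2 : ∀ (a b : X) (j : ℕ), 2 ≤ j → j ≤ n - 1 → F a b * e j = e j * F a b
  L3 : ∀ (a b : X) (j : ℕ), 1 ≤ j → j ≤ n - 2 → G a b * e j = e j * G a b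
  L4 : ∀ (a b c d : X), 2 ≤ n → F a b * G c d = G c d * F a b
  L5 : ∀ i j, 1 ≤ i → i ≤ n - 1 → 1 ≤ j → j ≤ n - 1 → (i = j + 1 ∨ j = i + 1) →
    e i * e j * e i = e i
  L6 : ∀ (a b : X) (j : ℕ), 2 ≤ j → j ≤ n - 1 → e j * W a b = W a b * e (j - 1)
  L7 : ∀ (a b : X) (j : ℕ), 1 ≤ j → j ≤ n - 2 → e j * V a b = V a b * e (j + 1)
  L8 : ∀ (a b c d : X), 2 ≤ n → G a b * W c d = W c a * e (n - 1) * G b d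
  L9 : ∀ (a b c d : X), 2 ≤ n → F a b * V c d = V a d * e 1 * F b c
  L10 : ∀ (a b c d : X), 2 ≤ n → W a b * F c d = F a c * e 1 * W d b
  L11 : ∀ (a b c d : X), 2 ≤ n → V a b * G c d = G b c * e (n - 1) * V a d
  L12 : ∀ (a b : X), 2 ≤ n → e 1 * W a b = ascProd e 1 (n - 1) * V a b
  L13 : ∀ (a b : X), 2 ≤ n → W a b * e (n - 1) = V a b * ascProd e 1 (n - 1)
  L14 : ∀ (a b : X), 2 ≤ n → e (n - 1) * V a b = descProd e 1 (n - 1) * W a b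
  L15 : ∀ (a b : X), 2 ≤ n → V a b * e 1 = W a b * descProd e 1 (n - 1)
  L16 : ∀ (a b c d : X), W a b * W c d = F a c * ascProd e 1 (n - 1) * G b d
  L17 : ∀ (a b c d : X), V a b * V c d = G b d * descProd e 1 (n - 1) * F a c
  L18 : ∀ (a b c d : X), 2 ≤ n → V a b * e 1 * W c d = F a c * G b d
  L19 : ∀ j, 1 ≤ j → j ≤ n - 1 → e j * e j = β • e j
  L20 : ∀ (a b c d : X), F c a * F b d = α a b • F c d
  L21 : ∀ (a b : X), 2 ≤ n → e 1 * F a b * e 1 = α a b • e 1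
  L22 : ∀ (a b c d : X), F c a * W b d = α a b • W c d
  L23 : ∀ (a b c d : X), V a d * F b c = α a b • V c d
  L24 : ∀ (a b c d : X), V a c * W b d = α a b • G c d
  L25 : ∀ (a b c d : X), G c a * G b d = δ a b • G c d
  L26 : ∀ (a b : X), 2 ≤ n → e (n - 1) * G a b * e (n - 1) = δ a b • e (n - 1)
  L27 : ∀ (a b c d : X), G c a * V d b = δ a b • V d c
  L28 : ∀ (a b c d : X), W c a * G b d = δ a b • W c d
  L29 : ∀ (a b c d : X), W c a * V d b = δ a b • F c d
  L30 : Odd n → ∀ (a b c d : X),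
    W c b * Oprod e n * W a d * Oprod e n = γ a b • (W c d * Oprod e n)
  L31 : Odd n → ∀ (a b c d : X),
    F c a * Eprod e n * V d b * Eprod e n = γ a b • (F c d * Eprod e n)
  L32 : Odd n → ∀ (a b c d : X),
    V a d * Eprod e n * V c b * Eprod e n = γ a b • (V c d * Eprod e n)
  L33 : Odd n → ∀ (a b c d : X),
    G c b * Oprod e n * W a d * Oprod e n = γ a b • (G c d * Oprod e n)
  L34 : Even n → ∀ (a b : X),
    ThetaProd e n * W a b * ThetaProd e n = γ a b • ThetaProd e n
  L35 : n = 1 → ∀ (a b c d : X), F c a * G b d = γ a b • W c d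
  L36 : n = 1 → ∀ (a b c d : X), G d b * F a c = γ a b • V c d
  L37 : n = 1 → ∀ (a b c d : X), W c b * F a d = γ a b • F c d
  L38 : n = 1 → ∀ (a b c d : X), V a c * G b d = γ a b • G c d

private lemma list_prod_comm {A : Type*} [Ring A] (x : A) (e : ℕ → A) :
    ∀ l : List ℕ, (∀ j ∈ l, x * e j = e j * x) →
      x * (l.map e).prod = (l.map e).prod * x := by
  intro l
  induction l with
  | nil => simp
  | cons j t ih =>
    intro h
    simp only [List.map_cons, List.prod_cons]
    rw [← mul_assoc, h j (by simp), mul_assoc, ih (fun i hi => h i (by simp [hi])),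
      ← mul_assoc]

private lemma list_prod_shift {A : Type*} [Ring A] (x : A) (e : ℕ → A) :
    ∀ l : List ℕ, (∀ j ∈ l, x * e j = e (j + 1) * x) →
      x * (l.map e).prod = (l.map (fun j => e (j + 1))).prod * x := by
  intro l
  induction l with
  | nil => simp
  | cons j t ih =>
    intro h
    simp only [List.map_cons, List.prod_cons]
    rw [← mul_assoc, h j (by simp), mul_assoc, ih (fun i hi => h i (by simp [hi])),
      ← mul_assoc]

private lemma ascProd_single {A : Type*} [Ring A] (e : ℕ → A) (k : ℕ) :
    ascProd e k k = e k := by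
  simp [ascProd, List.range_succ]

private lemma ascProd_cons {A : Type*} [Ring A] (e : ℕ → A) (j k : ℕ) (h : j ≤ k) :
    ascProd e j k = e j * ascProd e (j + 1) k := by
  unfold ascProd
  have h1 : k + 1 - j = (k - j) + 1 := by omega
  have h2 : k + 1 - (j + 1) = k - j := by omega
  rw [h1, h2, List.range_succ_eq_map]
  simp only [List.map_cons, List.prod_cons, List.map_map, Nat.add_zero]
  congr 1
  exact congrArg List.prod (List.map_congr_left (fun i _ => by
    show e (j + (i + 1)) = e (j + 1 + i); congr 1; omega))

private lemma lemA {R : Type*} [CommRing R] {A : Type*} [Ring A] [Algebra R A] {X : Type*}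
    (n : ℕ) (e : ℕ → A) (F G W V : X → X → A) (β : R) (α δ γ : X → X → R)
    (hrel : LabelAlgebraRel R A X n e F G W V β α δ γ)
    (m : ℕ) (hm : n = 2 * m + 1) :
    ∀ j, 1 ≤ j → ∀ s, s + j = m →
      (((List.range j).map (fun i => 2 * s + 2 + 2 * i)).map e).prod *
        ascProd e (2 * s + 1) (2 * m) =
      (((List.range j).map (fun i => 2 * s + 2 + 2 * i)).map e).prod := by
  intro j
  induction j with
  | zero => omega
  | succ j ih =>
    intro _ s hs
    rcases Nat.eq_zero_or_pos j with hj | hj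
    · subst hj
      simp only [List.range_succ, List.range_zero, List.nil_append, List.map_cons,
        List.map_nil, List.prod_cons, List.prod_nil, mul_one, Nat.mul_zero, Nat.add_zero]
      rw [ascProd_cons e _ _ (by omega)]
      have h11 : 2 * s + 1 + 1 = 2 * m := by omega
      rw [h11, ascProd_single]
      rw [← mul_assoc]
      exact hrel.L5 (2 * m) (2 * s + 1) (by omega) (by omega) (by omega) (by omega)
        (Or.inl (by omega))
    · -- inductive step
      set T' := (((List.range j).map (fun i => 2 * (s + 1) + 2 + 2 * i)).map e).prod with hT'
      have hsplit : (((List.range (j + 1)).map (fun i => 2 * s + 2 + 2 * i)).map e).prod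
          = e (2 * s + 2) * T' := by
        rw [List.range_succ_eq_map]
        simp only [List.map_cons, List.prod_cons, List.map_map, Function.comp,
          Nat.mul_zero, Nat.add_zero]
        rw [hT', List.map_map]
        congr 1
        exact congrArg List.prod (List.map_congr_left (fun i _ => by
          show e (2 * s + 2 + 2 * (i + 1)) = e (2 * (s + 1) + 2 + 2 * i); congr 1; omega))
      have hasc : ascProd e (2 * s + 1) (2 * m)
          = e (2 * s + 1) * (e (2 * s + 2) * ascProd e (2 * (s + 1) + 1) (2 * m)) := by
        rw [ascProd_cons e _ _ (by omega)]
        rw [show 2 * s + 1 + 1 = 2 * s + 2 from by omega]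
        rw [ascProd_cons e _ _ (by omega)]
        rw [show 2 * s + 2 + 1 = 2 * (s + 1) + 1 from by omega]
      have hmem : ∀ k ∈ (List.range j).map (fun i => 2 * (s + 1) + 2 + 2 * i),
          ∃ i, i < j ∧ k = 2 * (s + 1) + 2 + 2 * i := by
        intro k hk
        simp only [List.mem_map, List.mem_range] at hk
        obtain ⟨i, hi, rfl⟩ := hk
        exact ⟨i, hi, rfl⟩
      have comm1 : e (2 * s + 1) * T' = T' * e (2 * s + 1) := by
        apply list_prod_comm
        intro k hk
        obtain ⟨i, hi, rfl⟩ := hmem k hk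
        exact hrel.L1 (2 * s + 1) (2 * (s + 1) + 2 + 2 * i) (by omega) (by omega)
          (by omega) (by omega) (Or.inl (by omega))
      have comm2 : e (2 * s + 2) * T' = T' * e (2 * s + 2) := by
        apply list_prod_comm
        intro k hk
        obtain ⟨i, hi, rfl⟩ := hmem k hk
        exact hrel.L1 (2 * s + 2) (2 * (s + 1) + 2 + 2 * i) (by omega) (by omega)
          (by omega) (by omega) (Or.inl (by omega))
      have c1 : ∀ z : A, T' * (e (2 * s + 1) * z) = e (2 * s + 1) * (T' * z) := by
        intro z; rw [← mul_assoc, ← comm1, mul_assoc]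
      have c2 : ∀ z : A, T' * (e (2 * s + 2) * z) = e (2 * s + 2) * (T' * z) := by
        intro z; rw [← mul_assoc, ← comm2, mul_assoc]
      have hih : T' * ascProd e (2 * (s + 1) + 1) (2 * m) = T' :=
        ih hj (s + 1) (by omega)
      rw [hsplit, hasc, mul_assoc, c1, c2, hih, ← mul_assoc, ← mul_assoc,
        hrel.L5 (2 * s + 2) (2 * s + 1) (by omega) (by omega) (by omega) (by omega)
          (Or.inl (by omega))]


theorem stmt {R : Type*} [CommRing R] {A : Type*} [Ring A] [Algebra R A] {X : Type*}
    (n : ℕ) (e : ℕ → A) (F G W V : X → X → A) (β : R) (α δ γ : X → X → R)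
    (hrel : LabelAlgebraRel R A X n e F G W V β α δ γ)
    (hodd : Odd n) (a b c d : X) :
    W c b * Oprod e n * F a d * Eprod e n = γ a b • (F c d * Eprod e n) := by
  obtain ⟨m, hm⟩ := id hodd
  rcases Nat.eq_zero_or_pos m with h0 | hpos
  · subst h0
    have hn1 : n = 1 := by omega
    simp only [Oprod, Eprod, hn1]
    norm_num
    exact hrel.L37 hn1 a b c d
  · have h2n : 2 ≤ n := by omega
    have hn1 : n - 1 = 2 * m := by omega
    have hhalf : (n - 1) / 2 = m := by omega
    have hE : Eprod e n = (((List.range m).map (fun i => 2 * i + 2)).map e).prod := by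
      rw [Eprod, hhalf, List.map_map]; rfl
    have hO : Oprod e n = (((List.range m).map (fun i => 2 * i + 1)).map e).prod := by
      rw [Oprod, hhalf, List.map_map]; rfl
    have hWO : W c b * Oprod e n = Eprod e n * W c b := by
      rw [hO, list_prod_shift (W c b) e _ ?side]
      case side =>
        intro j hj
        simp only [List.mem_map, List.mem_range] at hj
        obtain ⟨i, hi, rfl⟩ := hj
        have h6 := hrel.L6 c b (2 * i + 1 + 1) (by omega) (by omega)
        simpa using h6.symm
      rw [hE, List.map_map, List.map_map]
      rfl
    have hFE : F c a * Eprod e n = Eprod e n * F c a := by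
      rw [hE]
      apply list_prod_comm
      intro j hj
      simp only [List.mem_map, List.mem_range] at hj
      obtain ⟨i, hi, rfl⟩ := hj
      exact hrel.L2 c a _ (by omega) (by omega)
    have hEabs : Eprod e n * ascProd e 1 (n - 1) = Eprod e n := by
      have h := lemA n e F G W V β α δ γ hrel m hm m (by omega) 0 (by omega)
      have hl : (List.range m).map (fun i => 2 * 0 + 2 + 2 * i)
          = (List.range m).map (fun i => 2 * i + 2) :=
        List.map_congr_left (fun i _ => by omega)
      rw [hl, show 2 * 0 + 1 = 1 from rfl] at h
      rw [hE, hn1]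
      exact h
    calc W c b * Oprod e n * F a d * Eprod e n
        = Eprod e n * W c b * F a d * Eprod e n := by rw [hWO]
      _ = Eprod e n * (W c b * F a d) * Eprod e n := by simp only [mul_assoc]
      _ = Eprod e n * (F c a * e 1 * W d b) * Eprod e n := by rw [hrel.L10 c b a d h2n]
      _ = Eprod e n * F c a * ((e 1 * W d b) * Eprod e n) := by simp only [mul_assoc]
      _ = F c a * Eprod e n * ((ascProd e 1 (n - 1) * V d b) * Eprod e n) := by
            rw [← hFE, hrel.L12 d b h2n]
      _ = F c a * (Eprod e n * ascProd e 1 (n - 1)) * (V d b * Eprod e n) := by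
            simp only [mul_assoc]
      _ = F c a * Eprod e n * V d b * Eprod e n := by rw [hEabs]; simp only [mul_assoc]
      _ = γ a b • (F c d * Eprod e n) := hrel.L31 hodd a b c d
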